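/- arXiv:2506.06079 — 9 statements merged into one kernel-verified Lean document; each statement's English description precedes it below -/
import Mathlib

section
/- Let f : ℝⁿ → ℝⁿ be continuously differentiable and let P ∈ ℝ^{n×n} be symmetric positive definite. Suppose that for every x ∈ ℝⁿ the matrix P·Df(x) + Df(x)ᵀ·P ⪯ 0, where Df(x) denotes the Jacobian matrix of f at x. Then for all a, b ∈ ℝⁿ, (a − b)ᵀ P (f(a) − f(b)) ≤ 0. -/
open Matrix

/-- The Jacobian matrix of a map `f : ℝⁿ → ℝᵖ` at a point `x`. -/
noncomputable def jacobianMatrix {n p : ℕ} (f : (Fin n → ℝ) → (Fin p → ℝ))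
    (x : Fin n → ℝ) : Matrix (Fin p) (Fin n) ℝ :=
  Matrix.of fun i j => fderiv ℝ f x (Pi.single j 1) i

lemma jac_mulVec {n p : ℕ} (f : (Fin n → ℝ) → (Fin p → ℝ)) (x v : Fin n → ℝ) :
    (jacobianMatrix f x) *ᵥ v = fderiv ℝ f x v := by
  funext i
  have hv : v = ∑ j, (v j) • (Pi.single j 1 : Fin n → ℝ) := by
    conv_lhs => rw [← Finset.univ_sum_single v]
    congr 1; funext j; rw [← Pi.single_smul]; simp
  conv_rhs => rw [hv, map_sum]
  simp [jacobianMatrix, Matrix.mulVec, dotProduct, mul_comm]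

/-- if `P ≻ 0` and `P·Df(x) + Df(x)ᵀ·P ⪯ 0` for all `x`, then
`(a − b)ᵀ P (f(a) − f(b)) ≤ 0` for all `a, b`. -/
theorem stmt_2 (n : ℕ) (f : (Fin n → ℝ) → (Fin n → ℝ)) (hf : ContDiff ℝ 1 f)
    (P : Matrix (Fin n) (Fin n) ℝ) (hP : P.PosDef)
    (hLMI : ∀ x : Fin n → ℝ,
      (-(P * jacobianMatrix f x + (jacobianMatrix f x)ᵀ * P)).PosSemidef) :
    ∀ a b : Fin n → ℝ, (a - b) ⬝ᵥ P.mulVec (f a - f b) ≤ 0 := by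
  intro a b
  set v : Fin n → ℝ := a - b with hv
  -- the scalar function along the segment
  set γ : ℝ → (Fin n → ℝ) := fun t => b + t • v with hγ
  -- linear functional w ↦ v ⬝ᵥ P *ᵥ w
  let L : (Fin n → ℝ) →ₗ[ℝ] ℝ :=
    { toFun := fun w => v ⬝ᵥ P.mulVec w
      map_add' := fun w₁ w₂ => by
        simp only [Matrix.mulVec_add, dotProduct_add]
      map_smul' := fun c w => by
        simp only [Matrix.mulVec_smul, dotProduct_smul, smul_eq_mul, RingHom.id_apply] }
  let Lc : (Fin n → ℝ) →L[ℝ] ℝ := L.toContinuousLinearMap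
  set g : ℝ → ℝ := fun t => v ⬝ᵥ P.mulVec (f (γ t)) with hg
  have hfd : Differentiable ℝ f := hf.differentiable one_ne_zero
  have hγd : ∀ t : ℝ, HasDerivAt γ v t := by
    intro t
    simpa [hγ] using ((hasDerivAt_id t).smul_const v).const_add b
  have hgd : ∀ t : ℝ, HasDerivAt g (v ⬝ᵥ P.mulVec (fderiv ℝ f (γ t) v)) t := by
    intro t
    have h1 : HasDerivAt (fun t => f (γ t)) (fderiv ℝ f (γ t) v) t :=
      (hfd (γ t)).hasFDerivAt.comp_hasDerivAt t (hγd t)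
    exact (Lc.hasFDerivAt.comp_hasDerivAt t h1 :)
  have hderiv_nonpos : ∀ t : ℝ, deriv g t ≤ 0 := by
    intro t
    rw [(hgd t).deriv]
    set J := jacobianMatrix f (γ t) with hJ
    have hkey := (hLMI (γ t)).dotProduct_mulVec_nonneg v
    rw [Matrix.neg_mulVec, dotProduct_neg, star_trivial] at hkey
    have hkey' : v ⬝ᵥ (P * J + Jᵀ * P) *ᵥ v ≤ 0 := by linarith
    rw [Matrix.add_mulVec, dotProduct_add, ← Matrix.mulVec_mulVec,
      ← Matrix.mulVec_mulVec] at hkey'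
    have hPs : Pᵀ = P := by
      have := hP.1.eq
      simpa [Matrix.conjTranspose_eq_transpose_of_trivial] using this
    have heq : v ⬝ᵥ Jᵀ *ᵥ (P *ᵥ v) = v ⬝ᵥ P *ᵥ (J *ᵥ v) := by
      rw [Matrix.dotProduct_mulVec v Jᵀ, Matrix.vecMul_transpose,
        Matrix.dotProduct_mulVec v P, ← hPs, Matrix.vecMul_transpose, hPs,
        dotProduct_comm]
    rw [heq] at hkey'
    have : v ⬝ᵥ P *ᵥ (J *ᵥ v) ≤ 0 := by linarith
    rwa [jac_mulVec] at this
  have hanti : Antitone g :=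
    antitone_of_deriv_nonpos (fun t => (hgd t).differentiableAt) hderiv_nonpos
  have h01 : g 1 ≤ g 0 := hanti (by norm_num)
  have h0 : γ 0 = b := by simp [hγ]
  have h1 : γ 1 = a := by simp [hγ, hv]
  rw [hg] at h01
  simp only [h0, h1] at h01
  calc v ⬝ᵥ P.mulVec (f a - f b)
      = v ⬝ᵥ P.mulVec (f a) - v ⬝ᵥ P.mulVec (f b) := by
        rw [Matrix.mulVec_sub, dotProduct_sub]
    _ ≤ 0 := by linarith
end

section
/- Let n, n_Z, m, q be positive integers with n_Z ≥ n. Let A ∈ ℝ^{n×n_Z}, B ∈ ℝ^{n×m}, C ∈ ℝ^{m×n_Z}, E ∈ ℝ^{n×q}, F ∈ ℝ^{m×q}, K ∈ ℝ^{m×n_Z}, and let Q : ℝⁿ → ℝ^{n_Z−n} be any map; set Z(x) := (x, Q(x)) ∈ ℝ^{n_Z} and 𝓘 := [I_n 0_{n×(n_Z−n)}] ∈ ℝ^{n×n_Z}. Suppose there exists a symmetric positive definite 𝒫 ∈ ℝ^{n×n} such that 𝓘ᵀ𝒫(A + BK) + (A + BK)ᵀ𝒫𝓘 ⪯ 0 and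 𝓘ᵀ𝒫B = Cᵀ. Let w : ℝ → ℝ^q and v₁, v₂ : ℝ → ℝ^m be functions, and let x₁, x₂ : ℝ → ℝⁿ be differentiable with x_i'(t) = (A + BK)·Z(x_i(t)) + B·v_i(t) + E·w(t) for i = 1, 2. Define e_i(t) := C·Z(x_i(t)) + F·w(t) and V(t) := ½(x₁(t) − x₂(t))ᵀ𝒫(x₁(t) − x₂(t)). Then V is differentiable and V'(t) ≤ ⟨e₁(t) − e₂(t), v₁(t) − v₂(t)⟩ for all t. -/
open Matrix

/-- The library vector `Z(x) = (x, Q(x)) ∈ ℝ^{n_Z}`, with `ℝ^{n_Z}` split as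
`ℝ^n × ℝ^{n_Z − n}`. -/
def Zvec {n p : ℕ} (Q : (Fin n → ℝ) → (Fin p → ℝ)) (x : Fin n → ℝ) :
    (Fin n ⊕ Fin p) → ℝ :=
  Sum.elim x (Q x)

/-- The matrix `𝓘 = [I_n  0_{n×p}]`. -/
def calI (n p : ℕ) : Matrix (Fin n) (Fin n ⊕ Fin p) ℝ :=
  Matrix.fromCols 1 0

lemma quad_deriv {n : ℕ} (M : Matrix (Fin n) (Fin n) ℝ) {f : ℝ → Fin n → ℝ}
    {f' : Fin n → ℝ} {t : ℝ} (hf : HasDerivAt f f' t) :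
    HasDerivAt (fun s => f s ⬝ᵥ M.mulVec (f s))
      (f' ⬝ᵥ M.mulVec (f t) + f t ⬝ᵥ M.mulVec f') t := by
  have hfi : ∀ i, HasDerivAt (fun s => f s i) (f' i) t := hasDerivAt_pi.mp hf
  have h := HasDerivAt.fun_sum (u := (Finset.univ : Finset (Fin n)))
    (A := fun i s => f s i * ∑ j, M i j * f s j)
    (A' := fun i => f' i * (∑ j, M i j * f t j) + f t i * (∑ j, M i j * f' j))
    (fun i _ => (hfi i).mul (HasDerivAt.fun_sum fun j _ => (hfi j).const_mul (M i j)))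
  refine h.congr_deriv ?_
  simp [dotProduct, mulVec, Finset.sum_add_distrib]

/-- model-based incremental passivation. If `P ≻ 0`,
`𝓘ᵀP(A+BK) + (A+BK)ᵀP𝓘 ⪯ 0` and `𝓘ᵀPB = Cᵀ`, then the closed loop
`ẋ = (A+BK)Z(x) + Bv + Ew`, `e = CZ(x) + Fw` is incrementally passive with
storage function `V = ½(x₁−x₂)ᵀP(x₁−x₂)`. -/
theorem stmt_4 (n nZ m q : ℕ) (hn : 0 < n) (hnZ : n ≤ nZ) (hm : 0 < m) (hq : 0 < q)
    (A : Matrix (Fin n) (Fin n ⊕ Fin (nZ - n)) ℝ)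
    (B : Matrix (Fin n) (Fin m) ℝ)
    (C : Matrix (Fin m) (Fin n ⊕ Fin (nZ - n)) ℝ)
    (E : Matrix (Fin n) (Fin q) ℝ) (F : Matrix (Fin m) (Fin q) ℝ)
    (K : Matrix (Fin m) (Fin n ⊕ Fin (nZ - n)) ℝ)
    (Q : (Fin n → ℝ) → (Fin (nZ - n) → ℝ))
    (P : Matrix (Fin n) (Fin n) ℝ) (hP : P.PosDef)
    (hLMI : (-((calI n (nZ - n))ᵀ * (P * (A + B * K)) +
        ((A + B * K)ᵀ * P) * calI n (nZ - n))).PosSemidef)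
    (hPB : (calI n (nZ - n))ᵀ * (P * B) = Cᵀ)
    (w : ℝ → Fin q → ℝ) (v₁ v₂ : ℝ → Fin m → ℝ) (x₁ x₂ : ℝ → Fin n → ℝ)
    (hx₁ : ∀ t : ℝ, HasDerivAt x₁
      ((A + B * K).mulVec (Zvec Q (x₁ t)) + B.mulVec (v₁ t) + E.mulVec (w t)) t)
    (hx₂ : ∀ t : ℝ, HasDerivAt x₂
      ((A + B * K).mulVec (Zvec Q (x₂ t)) + B.mulVec (v₂ t) + E.mulVec (w t)) t) :
    ∀ t : ℝ, ∃ d : ℝ,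
      HasDerivAt (fun s => (1/2 : ℝ) * ((x₁ s - x₂ s) ⬝ᵥ P.mulVec (x₁ s - x₂ s))) d t ∧
      d ≤ ((C.mulVec (Zvec Q (x₁ t)) + F.mulVec (w t)) -
            (C.mulVec (Zvec Q (x₂ t)) + F.mulVec (w t))) ⬝ᵥ (v₁ t - v₂ t) := by
  intro t
  set G := A + B * K with hG
  set z : (Fin n ⊕ Fin (nZ - n)) → ℝ := Zvec Q (x₁ t) - Zvec Q (x₂ t) with hz
  set u : Fin m → ℝ := v₁ t - v₂ t with hu
  set δ : Fin n → ℝ := x₁ t - x₂ t with hδdef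
  set δ' : Fin n → ℝ := G.mulVec z + B.mulVec u with hδ'
  have hPt : Pᵀ = P := hP.1
  -- derivative of the difference
  have hdiff : HasDerivAt (fun s => x₁ s - x₂ s) δ' t := by
    have h := (hx₁ t).fun_sub (hx₂ t)
    refine h.congr_deriv ?_
    simp only [hδ', hz, hu, mulVec_sub]
    abel
  have hV := (quad_deriv P hdiff).const_mul (1/2 : ℝ)
  refine ⟨_, hV, ?_⟩
  -- symmetry of P-quadratic form
  have hsym : ∀ a b : Fin n → ℝ, a ⬝ᵥ P.mulVec b = b ⬝ᵥ P.mulVec a := by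
    intro a b
    rw [dotProduct_mulVec, ← mulVec_transpose, hPt, dotProduct_comm]
  -- x₁ t - x₂ t = calI *ᵥ z
  have hIz : (calI n (nZ - n)).mulVec z = δ := by
    simp [hz, hδdef, calI, Zvec, mulVec_sub]
  have hd : (1/2 : ℝ) * (δ' ⬝ᵥ P.mulVec δ + δ ⬝ᵥ P.mulVec δ') = δ ⬝ᵥ P.mulVec δ' := by
    rw [hsym δ' δ]; ring
  rw [hd]
  -- pull back through calI
  have hpull : ∀ {k : Type} [Fintype k] (M : Matrix (Fin n) k ℝ) (y : k → ℝ),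
      δ ⬝ᵥ P.mulVec (M.mulVec y) = z ⬝ᵥ ((calI n (nZ - n))ᵀ * (P * M)).mulVec y := by
    intro k _ M y
    symm
    rw [← Matrix.mulVec_mulVec y ((calI n (nZ - n))ᵀ) (P * M),
      dotProduct_mulVec z, vecMul_transpose, hIz,
      ← Matrix.mulVec_mulVec y P M]
  have hexp : δ ⬝ᵥ P.mulVec δ' =
      z ⬝ᵥ ((calI n (nZ - n))ᵀ * (P * G)).mulVec z +
      z ⬝ᵥ ((calI n (nZ - n))ᵀ * (P * B)).mulVec u := by
    rw [hδ', mulVec_add, dotProduct_add, hpull G z, hpull B u]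
  rw [hexp]
  -- the quadratic term is ≤ 0
  set S := (calI n (nZ - n))ᵀ * (P * G) with hS
  have hST : (Gᵀ * P) * calI n (nZ - n) = Sᵀ := by
    rw [hS, transpose_mul, transpose_mul, transpose_transpose, hPt, Matrix.mul_assoc]
  have hzSz : z ⬝ᵥ Sᵀ.mulVec z = z ⬝ᵥ S.mulVec z := by
    rw [dotProduct_mulVec, vecMul_transpose, dotProduct_comm]
  have hquad : z ⬝ᵥ S.mulVec z ≤ 0 := by
    have h0 := hLMI.dotProduct_mulVec_nonneg z
    simp only [star_trivial, hST, neg_mulVec, add_mulVec, dotProduct_neg, dotProduct_add,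
      hzSz] at h0
    linarith
  -- the cross term equals the passivity product
  have hcross : z ⬝ᵥ ((calI n (nZ - n))ᵀ * (P * B)).mulVec u =
      ((C.mulVec (Zvec Q (x₁ t)) + F.mulVec (w t)) -
            (C.mulVec (Zvec Q (x₂ t)) + F.mulVec (w t))) ⬝ᵥ u := by
    rw [hPB, dotProduct_mulVec, vecMul_transpose]
    congr 1
    simp [hz, mulVec_sub]
  rw [hcross]
  linarith
end

section
/- Let P ∈ ℝ^{n×n} be symmetric positive definite, M ∈ ℝ^{n×n}, N ∈ ℝ^{n×p}, and R ∈ ℝ^{n×r}. Suppose the block matrix [[−P·M − Mᵀ·P − R·Rᵀ, P·N], [Nᵀ·P, I_p]] is positive semidefinite. Then for every matrix J ∈ ℝ^{p×n} with Jᵀ·J ⪯ R·Rᵀ, it holds that P·M + P·N·J + (P·M + P·N·J)ᵀ ⪯ 0. -/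
open Matrix

/-- Schur-complement step. If `P ≻ 0` and the block matrix
`[[−PM − MᵀP − RRᵀ, PN], [NᵀP, I]] ⪰ 0`, then for every `J` with `JᵀJ ⪯ RRᵀ`
one has `PM + PNJ + (PM + PNJ)ᵀ ⪯ 0`. -/
theorem stmt_5 (n p r : ℕ)
    (P : Matrix (Fin n) (Fin n) ℝ) (hP : P.PosDef)
    (M : Matrix (Fin n) (Fin n) ℝ) (N : Matrix (Fin n) (Fin p) ℝ)
    (R : Matrix (Fin n) (Fin r) ℝ)
    (hblk : (Matrix.fromBlocks (-(P * M) - Mᵀ * P - R * Rᵀ) (P * N)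
        (Nᵀ * P) (1 : Matrix (Fin p) (Fin p) ℝ)).PosSemidef) :
    ∀ J : Matrix (Fin p) (Fin n) ℝ, (R * Rᵀ - Jᵀ * J).PosSemidef →
      (-(P * M + P * N * J + (P * M + P * N * J)ᵀ)).PosSemidef := by
  intro J hJ
  have hPs : Pᵀ = P := hP.1.eq
  have hsym : ∀ (A : Matrix (Fin n) (Fin n) ℝ) (x : Fin n → ℝ),
      x ⬝ᵥ Aᵀ *ᵥ x = x ⬝ᵥ A *ᵥ x := by
    intro A x
    rw [Matrix.mulVec_transpose, dotProduct_comm, Matrix.dotProduct_mulVec]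
  rw [Matrix.posSemidef_iff_dotProduct_mulVec]
  constructor
  · unfold Matrix.IsHermitian
    rw [Matrix.conjTranspose_eq_transpose_of_trivial, Matrix.transpose_neg,
      Matrix.transpose_add, Matrix.transpose_transpose, add_comm]
  · intro x
    have h1 := hblk.dotProduct_mulVec_nonneg (Sum.elim x (-(J *ᵥ x)))
    have h2 := hJ.dotProduct_mulVec_nonneg x
    simp only [fromBlocks_mulVec, star_trivial, sumElim_dotProduct_sumElim,
      Sum.elim_comp_inl, Sum.elim_comp_inr, Matrix.one_mul,
      Matrix.sub_mulVec, Matrix.add_mulVec, Matrix.neg_mulVec, Matrix.mulVec_neg,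
      dotProduct_add, dotProduct_sub, dotProduct_neg, neg_dotProduct,
      Matrix.one_mulVec, Matrix.mulVec_mulVec] at h1 h2 ⊢
    have e1 : x ⬝ᵥ (Mᵀ * P) *ᵥ x = x ⬝ᵥ (P * M) *ᵥ x := by
      have h : (Mᵀ * P)ᵀ = P * M := by
        rw [Matrix.transpose_mul, hPs, Matrix.transpose_transpose]
      rw [← h, hsym]
    have e2 : J *ᵥ x ⬝ᵥ (Nᵀ * P) *ᵥ x = x ⬝ᵥ (P * N * J) *ᵥ x := by
      conv_lhs => rw [Matrix.dotProduct_mulVec, Matrix.vecMul_mulVec]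
      rw [← Matrix.dotProduct_mulVec]
      have h : Jᵀ * (Nᵀ * P) = (P * N * J)ᵀ := by
        rw [Matrix.transpose_mul, Matrix.transpose_mul, hPs]
      rw [h, hsym]
    have e3 : J *ᵥ x ⬝ᵥ J *ᵥ x = x ⬝ᵥ (Jᵀ * J) *ᵥ x := by
      conv_lhs => rw [Matrix.dotProduct_mulVec, Matrix.vecMul_mulVec]
      rw [← Matrix.dotProduct_mulVec]
    have e4 : x ⬝ᵥ (P * M + P * N * J)ᵀ *ᵥ x = x ⬝ᵥ (P * M) *ᵥ x + x ⬝ᵥ (P * N * J) *ᵥ x := by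
      rw [hsym, Matrix.add_mulVec, dotProduct_add]
    rw [e4]
    linarith [h1, h2, e1, e2, e3]
end

section
/- Let A ∈ ℝ^{n×n_Z}, B ∈ ℝ^{n×m}, C ∈ ℝ^{m×n_Z}, E ∈ ℝ^{n×q}, F ∈ ℝ^{m×q}, Γ ∈ ℝ^{q×q}, and K ∈ ℝ^{m×n_Z}. Let Z₀ ∈ ℝ^{n_Z×T}, U₀ ∈ ℝ^{m×T}, M₀ ∈ ℝ^{q×T} be data matrices and define X₁ := A·Z₀ + B·U₀ + E·Γ·M₀ and E₀ := C·Z₀ + F·Γ·M₀. Suppose G₁ ∈ ℝ^{T×n_Z} and G₂ ∈ ℝ^{T×m} satisfy Z₀·G₁ = I_{n_Z}, U₀·G₁ = K, M₀·G₁ = 0, Z₀·G₂ = 0, U₀·G₂ = I_m, and M₀·G₂ = 0. Then A + B·K = X₁·G₁, B = X₁·G₂, and C = E₀·G₁. -/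
open Matrix

/-- data-based representation of the closed-loop system. -/
theorem stmt_7 (n nZ m q T : ℕ)
    (A : Matrix (Fin n) (Fin nZ) ℝ) (B : Matrix (Fin n) (Fin m) ℝ)
    (C : Matrix (Fin m) (Fin nZ) ℝ) (E : Matrix (Fin n) (Fin q) ℝ)
    (F : Matrix (Fin m) (Fin q) ℝ) (Γ : Matrix (Fin q) (Fin q) ℝ)
    (K : Matrix (Fin m) (Fin nZ) ℝ)
    (Z₀ : Matrix (Fin nZ) (Fin T) ℝ) (U₀ : Matrix (Fin m) (Fin T) ℝ)
    (M₀ : Matrix (Fin q) (Fin T) ℝ)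
    (G₁ : Matrix (Fin T) (Fin nZ) ℝ) (G₂ : Matrix (Fin T) (Fin m) ℝ)
    (h1 : Z₀ * G₁ = 1) (h2 : U₀ * G₁ = K) (h3 : M₀ * G₁ = 0)
    (h4 : Z₀ * G₂ = 0) (h5 : U₀ * G₂ = 1) (h6 : M₀ * G₂ = 0) :
    A + B * K = (A * Z₀ + B * U₀ + E * Γ * M₀) * G₁ ∧
    B = (A * Z₀ + B * U₀ + E * Γ * M₀) * G₂ ∧
    C = (C * Z₀ + F * Γ * M₀) * G₁ := by
  refine ⟨?_, ?_, ?_⟩ <;>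
    simp [Matrix.add_mul, Matrix.mul_assoc, h1, h2, h3, h4, h5, h6]
end

section
/- Let A ∈ ℝ^{n×n_Z}, B ∈ ℝ^{n×m}, C ∈ ℝ^{m×n_Z}, E ∈ ℝ^{n×q}, F ∈ ℝ^{m×q}, Γ ∈ ℝ^{q×q}, with n_Z ≥ n, and set 𝓘 := [I_n 0_{n×(n_Z−n)}] ∈ ℝ^{n×n_Z}. Let Z₀ ∈ ℝ^{n_Z×T}, U₀ ∈ ℝ^{m×T}, M₀ ∈ ℝ^{q×T} be data matrices and define X₁ := A·Z₀ + B·U₀ + E·Γ·M₀ and E₀ := C·Z₀ + F·Γ·M₀. Suppose there exist Y ∈ ℝ^{T×n_Z}, G₂ ∈ ℝ^{T×m}, and matrices P₁ ∈ ℝ^{n×n}, P₂ ∈ ℝ^{(n_Z−n)×(n_Z−n)} with P := blockdiag(P₁, P₂) symmetric positive definite, such that: Z₀·Y = P, M₀·Y = 0, Z₀·G₂ = 0, U₀·G₂ = I_m, M₀·G₂ = 0, 𝓘ᵀ·X₁·Y + Yᵀ·X₁ᵀ·𝓘 ⪯ 0, and [ (X₁·G₂)ᵀ 0_{m×(n_Z−n)}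 ] = E₀·Y. Then, with K := U₀·Y·P⁻¹ and 𝒫 := P₁⁻¹, it holds that 𝒫 is symmetric positive definite, 𝓘ᵀ𝒫(A + BK) + (A + BK)ᵀ𝒫𝓘 ⪯ 0, and 𝓘ᵀ𝒫B = Cᵀ. -/
open Matrix

lemma posDef_of_fromBlocks_left {n p : ℕ} {P₁ : Matrix (Fin n) (Fin n) ℝ}
    {P₂ : Matrix (Fin p) (Fin p) ℝ}
    (hP : (Matrix.fromBlocks P₁ 0 0 P₂).PosDef) : P₁.PosDef := by
  rw [Matrix.posDef_iff_dotProduct_mulVec]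
  constructor
  · have h := hP.1
    rw [Matrix.IsHermitian, Matrix.fromBlocks_conjTranspose] at h
    exact (Matrix.fromBlocks_inj.mp h).1
  · intro x hx
    have hx' : (Sum.elim x 0 : Fin n ⊕ Fin p → ℝ) ≠ 0 := by
      intro h
      apply hx
      funext i
      have := congrFun h (Sum.inl i)
      simpa using this
    have h := (Matrix.posDef_iff_dotProduct_mulVec.mp hP).2 hx'
    rw [Matrix.fromBlocks_mulVec] at h
    simpa [sumElim_dotProduct_sumElim] using h

lemma posDef_of_fromBlocks_right {n p : ℕ} {P₁ : Matrix (Fin n) (Fin n) ℝ}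
    {P₂ : Matrix (Fin p) (Fin p) ℝ}
    (hP : (Matrix.fromBlocks P₁ 0 0 P₂).PosDef) : P₂.PosDef := by
  rw [Matrix.posDef_iff_dotProduct_mulVec]
  constructor
  · have h := hP.1
    rw [Matrix.IsHermitian, Matrix.fromBlocks_conjTranspose] at h
    exact (Matrix.fromBlocks_inj.mp h).2.2.2
  · intro x hx
    have hx' : (Sum.elim 0 x : Fin n ⊕ Fin p → ℝ) ≠ 0 := by
      intro h
      apply hx
      funext i
      have := congrFun h (Sum.inr i)
      simpa using this
    have h := (Matrix.posDef_iff_dotProduct_mulVec.mp hP).2 hx'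
    rw [Matrix.fromBlocks_mulVec] at h
    simpa [sumElim_dotProduct_sumElim] using h

/-- algebraic core of data-driven incremental passivation.
The data-dependent LMIs imply the model-based conditions with
`K = U₀·Y·P⁻¹` and `𝒫 = P₁⁻¹`. -/
theorem stmt_8 (n nZ m q T : ℕ) (hnZ : n ≤ nZ)
    (A : Matrix (Fin n) (Fin n ⊕ Fin (nZ - n)) ℝ)
    (B : Matrix (Fin n) (Fin m) ℝ)
    (C : Matrix (Fin m) (Fin n ⊕ Fin (nZ - n)) ℝ)
    (E : Matrix (Fin n) (Fin q) ℝ) (F : Matrix (Fin m) (Fin q) ℝ)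
    (Γ : Matrix (Fin q) (Fin q) ℝ)
    (Z₀ : Matrix (Fin n ⊕ Fin (nZ - n)) (Fin T) ℝ)
    (U₀ : Matrix (Fin m) (Fin T) ℝ) (M₀ : Matrix (Fin q) (Fin T) ℝ)
    (Y : Matrix (Fin T) (Fin n ⊕ Fin (nZ - n)) ℝ)
    (G₂ : Matrix (Fin T) (Fin m) ℝ)
    (P₁ : Matrix (Fin n) (Fin n) ℝ)
    (P₂ : Matrix (Fin (nZ - n)) (Fin (nZ - n)) ℝ)
    (hP : (Matrix.fromBlocks P₁ 0 0 P₂).PosDef)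
    (hY1 : Z₀ * Y = Matrix.fromBlocks P₁ 0 0 P₂)
    (hY2 : M₀ * Y = 0)
    (hG1 : Z₀ * G₂ = 0) (hG2 : U₀ * G₂ = 1) (hG3 : M₀ * G₂ = 0)
    (hLMI : (-(((calI n (nZ - n))ᵀ * ((A * Z₀ + B * U₀ + E * Γ * M₀) * Y)) +
        ((A * Z₀ + B * U₀ + E * Γ * M₀) * Y)ᵀ * calI n (nZ - n))).PosSemidef)
    (hBC : Matrix.fromCols (((A * Z₀ + B * U₀ + E * Γ * M₀) * G₂)ᵀ) 0 =
        (C * Z₀ + F * Γ * M₀) * Y) :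
    (P₁⁻¹).PosDef ∧
    (-(((calI n (nZ - n))ᵀ *
          (P₁⁻¹ * (A + B * (U₀ * Y * (Matrix.fromBlocks P₁ 0 0 P₂)⁻¹)))) +
        ((A + B * (U₀ * Y * (Matrix.fromBlocks P₁ 0 0 P₂)⁻¹))ᵀ * P₁⁻¹) *
          calI n (nZ - n))).PosSemidef ∧
    (calI n (nZ - n))ᵀ * (P₁⁻¹ * B) = Cᵀ := by
  have p_def : nZ - n = nZ - n := rfl
  set P : Matrix (Fin n ⊕ Fin (nZ - n)) (Fin n ⊕ Fin (nZ - n)) ℝ := Matrix.fromBlocks P₁ 0 0 P₂ with hPdef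
  have hP1 : P₁.PosDef := posDef_of_fromBlocks_left hP
  have hP2 : P₂.PosDef := posDef_of_fromBlocks_right hP
  -- inverse of the block matrix
  have hPinv : P⁻¹ = Matrix.fromBlocks P₁⁻¹ 0 0 P₂⁻¹ := by
    apply Matrix.inv_eq_left_inv
    rw [hPdef, Matrix.fromBlocks_multiply]
    simp [Matrix.nonsing_inv_mul P₁ (Matrix.isUnit_iff_isUnit_det P₁ |>.mp hP1.isUnit),
      Matrix.nonsing_inv_mul P₂ (Matrix.isUnit_iff_isUnit_det P₂ |>.mp hP2.isUnit),
      Matrix.fromBlocks_one]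
  -- transpose of calI
  have hIt : (calI n (nZ - n))ᵀ = Matrix.fromRows (1 : Matrix (Fin n) (Fin n) ℝ) 0 := by
    rw [calI, Matrix.transpose_fromCols, Matrix.transpose_one, Matrix.transpose_zero]
  -- key commutation: 𝓘ᵀ * P₁⁻¹ = P⁻¹ * 𝓘ᵀ
  have hcomm : (calI n (nZ - n))ᵀ * P₁⁻¹ = P⁻¹ * (calI n (nZ - n))ᵀ := by
    rw [hIt, hPinv, Matrix.fromRows_mul, Matrix.fromBlocks_mul_fromRows]
    simp
  -- symmetry facts
  have hPsymm : Pᵀ = P := hP.1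
  have hPinvsymm : (P⁻¹)ᵀ = P⁻¹ := (hP.inv).1
  have hP1invsymm : (P₁⁻¹)ᵀ = P₁⁻¹ := (hP1.inv).1
  have hPP : P⁻¹ * P = 1 :=
    Matrix.nonsing_inv_mul P (Matrix.isUnit_iff_isUnit_det P |>.mp hP.isUnit)
  have hPP' : P * P⁻¹ = 1 :=
    Matrix.mul_nonsing_inv P (Matrix.isUnit_iff_isUnit_det P |>.mp hP.isUnit)
  -- X₁ Y = (A + B K) P
  set N : Matrix (Fin n) (Fin n ⊕ Fin (nZ - n)) ℝ := A + B * (U₀ * Y * P⁻¹) with hNdef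
  have hX1Y : (A * Z₀ + B * U₀ + E * Γ * M₀) * Y = N * P := by
    rw [hNdef]
    have : (A * Z₀ + B * U₀ + E * Γ * M₀) * Y
        = A * (Z₀ * Y) + B * (U₀ * Y) + E * Γ * (M₀ * Y) := by
      simp [Matrix.add_mul, Matrix.mul_assoc]
    rw [this, hY1, hY2, Matrix.mul_zero, add_zero, Matrix.add_mul, Matrix.mul_assoc,
      Matrix.mul_assoc, hPP, Matrix.mul_one]
  have hN : N = (A * Z₀ + B * U₀ + E * Γ * M₀) * Y * P⁻¹ := by
    rw [hX1Y, Matrix.mul_assoc, hPP', Matrix.mul_one]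
  refine ⟨hP1.inv, ?_, ?_⟩
  · -- middle goal
    set S := (calI n (nZ - n))ᵀ * ((A * Z₀ + B * U₀ + E * Γ * M₀) * Y) +
        ((A * Z₀ + B * U₀ + E * Γ * M₀) * Y)ᵀ * calI n (nZ - n) with hSdef
    have key : -((calI n (nZ - n))ᵀ * (P₁⁻¹ * N) + (Nᵀ * P₁⁻¹) * calI n (nZ - n))
        = (P⁻¹)ᴴ * (-S) * P⁻¹ := by
      have e1 : (calI n (nZ - n))ᵀ * (P₁⁻¹ * N)
          = P⁻¹ * ((calI n (nZ - n))ᵀ * ((A * Z₀ + B * U₀ + E * Γ * M₀) * Y)) * P⁻¹ := by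
        rw [← Matrix.mul_assoc, hcomm, hN]
        simp only [Matrix.mul_assoc]
      have e2 : (Nᵀ * P₁⁻¹) * calI n (nZ - n)
          = P⁻¹ * (((A * Z₀ + B * U₀ + E * Γ * M₀) * Y)ᵀ * calI n (nZ - n)) * P⁻¹ := by
        have := congrArg Matrix.transpose e1
        simpa [Matrix.transpose_mul, hPinvsymm, hP1invsymm, Matrix.mul_assoc] using this
      have hH : (P⁻¹)ᴴ = P⁻¹ := hP.inv.1
      rw [hH, hSdef, e1, e2]
      simp only [Matrix.mul_add, Matrix.add_mul, Matrix.mul_neg, Matrix.neg_mul, neg_add,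
        Matrix.mul_assoc]
    rw [key]
    exact hLMI.conjTranspose_mul_mul_same (P⁻¹)
  · -- last goal
    have hX1G : (A * Z₀ + B * U₀ + E * Γ * M₀) * G₂ = B := by
      have : (A * Z₀ + B * U₀ + E * Γ * M₀) * G₂
          = A * (Z₀ * G₂) + B * (U₀ * G₂) + E * Γ * (M₀ * G₂) := by
        simp [Matrix.add_mul, Matrix.mul_assoc]
      rw [this, hG1, hG2, hG3]
      simp
    have hCP : Matrix.fromCols Bᵀ 0 = C * P := by
      rw [hX1G] at hBC
      calc Matrix.fromCols Bᵀ 0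
          = (C * Z₀ + F * Γ * M₀) * Y := hBC
        _ = C * (Z₀ * Y) + F * Γ * (M₀ * Y) := by simp [Matrix.add_mul, Matrix.mul_assoc]
        _ = C * P := by rw [hY1, hY2, Matrix.mul_zero, add_zero]
    have hC : C = Matrix.fromCols (Bᵀ * P₁⁻¹) 0 := by
      have : C = (Matrix.fromCols Bᵀ 0 : Matrix (Fin m) (Fin n ⊕ Fin (nZ - n)) ℝ) * P⁻¹ := by
        rw [hCP, Matrix.mul_assoc, hPP', Matrix.mul_one]
      rw [this, hPinv, Matrix.fromCols_mul_fromBlocks]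
      simp
    rw [hC, Matrix.transpose_fromCols, hIt, Matrix.fromRows_mul, Matrix.transpose_mul,
      hP1invsymm, Matrix.transpose_transpose]
    simp
end

section
/- Under the hypotheses of the data-driven LMI conditions, the closed loop is incrementally passive along trajectories. Precisely: let A ∈ ℝ^{n×n_Z}, B ∈ ℝ^{n×m}, C ∈ ℝ^{m×n_Z}, E ∈ ℝ^{n×q}, F ∈ ℝ^{m×q}, Γ ∈ ℝ^{q×q} (n_Z ≥ n), 𝓘 := [I_n 0_{n×(n_Z−n)}], and let Q : ℝⁿ → ℝ^{n_Z−n} be any map with Z(x) := (x, Q(x)). Let Z₀, U₀, M₀ be data matrices, X₁ := A·Z₀ + B·U₀ + E·Γ·M₀, E₀ := C·Z₀ + F·Γ·M₀, and suppose Y, G₂, and P = blockdiag(P₁, P₂) ≻ 0 satisfy Z₀Y = P, M₀Y = 0, Z₀G₂ = 0, U₀G₂ = I_m, M₀G₂ = 0, 𝓘ᵀX₁Y + YᵀX₁ᵀ𝓘 ⪯ 0, and [ (X₁G₂)ᵀ 0 ] = E₀Y. Set K := U₀·Y·P⁻¹. Let w : ℝ → ℝ^q, v₁, v₂ : ℝ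 → ℝ^m be functions and x₁, x₂ : ℝ → ℝⁿ differentiable with x_i'(t) = A·Z(x_i(t)) + B·(K·Z(x_i(t)) + v_i(t)) + E·w(t), and set e_i(t) := C·Z(x_i(t)) + F·w(t). Then V(t) := ½(x₁(t) − x₂(t))ᵀP₁⁻¹(x₁(t) − x₂(t)) is differentiable with V'(t) ≤ ⟨e₁(t) − e₂(t), v₁(t) − v₂(t)⟩ for all t. -/
open Matrix

lemma dot_shift {a b : Type*} [Fintype a] [Fintype b] (G : Matrix a b ℝ)
    (u : b → ℝ) (y : a → ℝ) : (G *ᵥ u) ⬝ᵥ y = u ⬝ᵥ (Gᵀ *ᵥ y) := by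
  rw [dotProduct_comm, Matrix.dotProduct_mulVec, dotProduct_comm,
    Matrix.mulVec_transpose]

lemma hasDerivAt_quad {n : ℕ} (M : Matrix (Fin n) (Fin n) ℝ) (f : ℝ → Fin n → ℝ)
    (f' : Fin n → ℝ) (t : ℝ) (hf : HasDerivAt f f' t) :
    HasDerivAt (fun s => (1/2 : ℝ) * (f s ⬝ᵥ M.mulVec (f s)))
      ((1/2 : ℝ) * (f' ⬝ᵥ M.mulVec (f t) + f t ⬝ᵥ M.mulVec f')) t := by
  have hcomp : ∀ i, HasDerivAt (fun s => f s i) (f' i) t := fun i => hasDerivAt_pi.1 hf i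
  have h1 : ∀ i ∈ Finset.univ, HasDerivAt (fun s => f s i * ∑ j, M i j * f s j)
      (f' i * (∑ j, M i j * f t j) + f t i * (∑ j, M i j * f' j)) t := by
    intro i _
    exact (hcomp i).mul (HasDerivAt.fun_sum (fun j _ => (hcomp j).const_mul (M i j)))
  have h2 := (HasDerivAt.fun_sum h1).const_mul (1/2 : ℝ)
  have hfun : (fun s => (1/2 : ℝ) * (f s ⬝ᵥ M.mulVec (f s)))
      = fun s => (1/2 : ℝ) * ∑ i, f s i * ∑ j, M i j * f s j := by
    funext s; simp [dotProduct, Matrix.mulVec]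
  rw [hfun]
  refine h2.congr_deriv ?_
  simp [dotProduct, Matrix.mulVec, Finset.sum_add_distrib]

/-- data-driven incremental passivation along trajectories.
Under the data LMIs the controller `u = K·Z(x) + v` with `K = U₀YP⁻¹` renders
the closed loop incrementally passive with storage `½(x₁−x₂)ᵀP₁⁻¹(x₁−x₂)`. -/
theorem stmt_9 (n nZ m q T : ℕ) (hnZ : n ≤ nZ)
    (A : Matrix (Fin n) (Fin n ⊕ Fin (nZ - n)) ℝ)
    (B : Matrix (Fin n) (Fin m) ℝ)
    (C : Matrix (Fin m) (Fin n ⊕ Fin (nZ - n)) ℝ)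
    (E : Matrix (Fin n) (Fin q) ℝ) (F : Matrix (Fin m) (Fin q) ℝ)
    (Γ : Matrix (Fin q) (Fin q) ℝ)
    (Q : (Fin n → ℝ) → (Fin (nZ - n) → ℝ))
    (Z₀ : Matrix (Fin n ⊕ Fin (nZ - n)) (Fin T) ℝ)
    (U₀ : Matrix (Fin m) (Fin T) ℝ) (M₀ : Matrix (Fin q) (Fin T) ℝ)
    (Y : Matrix (Fin T) (Fin n ⊕ Fin (nZ - n)) ℝ)
    (G₂ : Matrix (Fin T) (Fin m) ℝ)
    (P₁ : Matrix (Fin n) (Fin n) ℝ)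
    (P₂ : Matrix (Fin (nZ - n)) (Fin (nZ - n)) ℝ)
    (hP : (Matrix.fromBlocks P₁ 0 0 P₂).PosDef)
    (hY1 : Z₀ * Y = Matrix.fromBlocks P₁ 0 0 P₂)
    (hY2 : M₀ * Y = 0)
    (hG1 : Z₀ * G₂ = 0) (hG2 : U₀ * G₂ = 1) (hG3 : M₀ * G₂ = 0)
    (hLMI : (-(((calI n (nZ - n))ᵀ * ((A * Z₀ + B * U₀ + E * Γ * M₀) * Y)) +
        ((A * Z₀ + B * U₀ + E * Γ * M₀) * Y)ᵀ * calI n (nZ - n))).PosSemidef)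
    (hBC : Matrix.fromCols (((A * Z₀ + B * U₀ + E * Γ * M₀) * G₂)ᵀ) 0 =
        (C * Z₀ + F * Γ * M₀) * Y)
    (w : ℝ → Fin q → ℝ) (v₁ v₂ : ℝ → Fin m → ℝ) (x₁ x₂ : ℝ → Fin n → ℝ)
    (hx₁ : ∀ t : ℝ, HasDerivAt x₁
      (A.mulVec (Zvec Q (x₁ t)) +
        B.mulVec ((U₀ * Y * (Matrix.fromBlocks P₁ 0 0 P₂)⁻¹).mulVec
          (Zvec Q (x₁ t)) + v₁ t) + E.mulVec (w t)) t)
    (hx₂ : ∀ t : ℝ, HasDerivAt x₂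
      (A.mulVec (Zvec Q (x₂ t)) +
        B.mulVec ((U₀ * Y * (Matrix.fromBlocks P₁ 0 0 P₂)⁻¹).mulVec
          (Zvec Q (x₂ t)) + v₂ t) + E.mulVec (w t)) t) :
    ∀ t : ℝ, ∃ d : ℝ,
      HasDerivAt (fun s => (1/2 : ℝ) * ((x₁ s - x₂ s) ⬝ᵥ (P₁⁻¹).mulVec (x₁ s - x₂ s))) d t ∧
      d ≤ ((C.mulVec (Zvec Q (x₁ t)) + F.mulVec (w t)) -
            (C.mulVec (Zvec Q (x₂ t)) + F.mulVec (w t))) ⬝ᵥ (v₁ t - v₂ t) := by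
  intro t
  set P : Matrix (Fin n ⊕ Fin (nZ - n)) (Fin n ⊕ Fin (nZ - n)) ℝ :=
    Matrix.fromBlocks P₁ 0 0 P₂ with hPdef
  set X₁ : Matrix (Fin n) (Fin T) ℝ := A * Z₀ + B * U₀ + E * Γ * M₀ with hX₁def
  set J : Matrix (Fin n) (Fin n ⊕ Fin (nZ - n)) ℝ := calI n (nZ - n) with hJdef
  -- basic facts about P and P₁
  have hPdet : IsUnit P.det := hP.det_pos.ne'.isUnit
  have hPP : P * P⁻¹ = 1 := Matrix.mul_nonsing_inv _ hPdet
  have hPP' : P⁻¹ * P = 1 := Matrix.nonsing_inv_mul _ hPdet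
  have hPsym : Pᵀ = P := hP.isHermitian
  have hP1sym : P₁ᵀ = P₁ := by
    have h := congrArg (Matrix.toBlocks₁₁) hPsym
    simpa [hPdef, Matrix.fromBlocks_transpose, Matrix.toBlocks_fromBlocks₁₁] using h
  have hP1det : IsUnit P₁.det := by
    have hd : P.det = P₁.det * P₂.det := by
      rw [hPdef]; exact Matrix.det_fromBlocks_zero₂₁ _ _ _
    have := hP.det_pos.ne'
    rw [hd] at this
    exact (IsUnit.mul_iff.mp (Ne.isUnit this)).1
  have hP1P : P₁⁻¹ * P₁ = 1 := Matrix.nonsing_inv_mul _ hP1det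
  have hP1invsym : (P₁⁻¹)ᵀ = P₁⁻¹ := by
    rw [Matrix.transpose_nonsing_inv, hP1sym]
  have hPinvsym : (P⁻¹)ᵀ = P⁻¹ := by
    rw [Matrix.transpose_nonsing_inv, hPsym]
  -- structural identities
  have hIP : J * P = P₁ * J := by
    rw [hJdef, hPdef, calI, Matrix.fromCols_mul_fromBlocks, Matrix.mul_fromCols]
    simp
  have hIPinv : J * P⁻¹ = P₁⁻¹ * J := by
    calc J * P⁻¹ = P₁⁻¹ * P₁ * (J * P⁻¹) := by rw [hP1P, Matrix.one_mul]
    _ = P₁⁻¹ * (P₁ * J) * P⁻¹ := by rw [Matrix.mul_assoc, Matrix.mul_assoc, Matrix.mul_assoc]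
    _ = P₁⁻¹ * (J * P) * P⁻¹ := by rw [hIP]
    _ = P₁⁻¹ * J * (P * P⁻¹) := by rw [Matrix.mul_assoc, Matrix.mul_assoc, Matrix.mul_assoc]
    _ = P₁⁻¹ * J := by rw [hPP, Matrix.mul_one]
  have hXG : X₁ * G₂ = B := by
    rw [hX₁def, Matrix.add_mul, Matrix.add_mul, Matrix.mul_assoc, Matrix.mul_assoc,
      Matrix.mul_assoc, hG1, hG2, hG3]
    simp
  have hCP : C * P = Bᵀ * J := by
    have h2 : (C * Z₀ + F * Γ * M₀) * Y = C * P := by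
      rw [Matrix.add_mul, Matrix.mul_assoc, Matrix.mul_assoc, hY1, hY2]
      simp [Matrix.mul_assoc]
    have h3 : Bᵀ * J = Matrix.fromCols Bᵀ 0 := by
      rw [hJdef, calI, Matrix.mul_fromCols]; simp
    rw [h3, ← hXG, hBC, h2]
  have hXYP : X₁ * Y = (A + B * (U₀ * Y * P⁻¹)) * P := by
    rw [hX₁def, Matrix.add_mul, Matrix.add_mul, Matrix.add_mul,
      Matrix.mul_assoc A Z₀ Y, hY1, Matrix.mul_assoc (E * Γ) M₀ Y, hY2,
      Matrix.mul_assoc B (U₀ * Y * P⁻¹) P, Matrix.mul_assoc (U₀ * Y) P⁻¹ P, hPP',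
      Matrix.mul_one, Matrix.mul_assoc B U₀ Y]
    simp
  -- key matrix identities
  have hJtP1 : Jᵀ * P₁⁻¹ = P⁻¹ * Jᵀ := by
    have := congrArg Matrix.transpose hIPinv
    simpa [Matrix.transpose_mul, hP1invsym, hPinvsym] using this.symm
  have hKey2 : Jᵀ * P₁⁻¹ * B = Cᵀ := by
    have h : Bᵀ * P₁⁻¹ * J = C := by
      rw [Matrix.mul_assoc, ← hIPinv, ← Matrix.mul_assoc, ← hCP,
        Matrix.mul_assoc, hPP, Matrix.mul_one]
    have := congrArg Matrix.transpose h
    simpa [Matrix.transpose_mul, hP1invsym, Matrix.mul_assoc] using this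
  have hKey1 : Jᵀ * P₁⁻¹ * (A + B * (U₀ * Y * P⁻¹)) = P⁻¹ * (Jᵀ * (X₁ * Y)) * P⁻¹ := by
    have hN : A + B * (U₀ * Y * P⁻¹) = X₁ * Y * P⁻¹ := by
      rw [hXYP, Matrix.mul_assoc _ P P⁻¹, hPP, Matrix.mul_one]
    rw [hJtP1, hN]
    simp only [Matrix.mul_assoc]
  -- vectors
  set ζ : (Fin n ⊕ Fin (nZ - n)) → ℝ := Zvec Q (x₁ t) - Zvec Q (x₂ t) with hζdef
  set dv : Fin m → ℝ := v₁ t - v₂ t with hdvdef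
  set N : Matrix (Fin n) (Fin n ⊕ Fin (nZ - n)) ℝ := A + B * (U₀ * Y * P⁻¹) with hNdef
  have hδζ : x₁ t - x₂ t = J *ᵥ ζ := by
    rw [hζdef, Matrix.mulVec_sub, hJdef, calI]
    simp [Zvec]
  have hδ : HasDerivAt (fun s => x₁ s - x₂ s) (N *ᵥ ζ + B *ᵥ dv) t := by
    have h := (hx₁ t).sub (hx₂ t)
    refine h.congr_deriv ?_
    rw [hNdef, hζdef, hdvdef]
    simp only [Matrix.mulVec_sub, Matrix.add_mulVec, Matrix.mulVec_add,
      ← Matrix.mulVec_mulVec]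
    abel
  -- the derivative
  set dδ : Fin n → ℝ := N *ᵥ ζ + B *ᵥ dv with hdδdef
  refine ⟨(1/2 : ℝ) * (dδ ⬝ᵥ P₁⁻¹ *ᵥ (x₁ t - x₂ t) + (x₁ t - x₂ t) ⬝ᵥ P₁⁻¹ *ᵥ dδ),
    hasDerivAt_quad P₁⁻¹ _ _ t hδ, ?_⟩
  -- symmetrize
  have hsymdot : dδ ⬝ᵥ P₁⁻¹ *ᵥ (x₁ t - x₂ t) = (x₁ t - x₂ t) ⬝ᵥ P₁⁻¹ *ᵥ dδ := by
    rw [Matrix.dotProduct_mulVec, ← Matrix.mulVec_transpose, hP1invsym,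
      dotProduct_comm]
  rw [hsymdot]
  have hhalf : (1/2 : ℝ) * ((x₁ t - x₂ t) ⬝ᵥ P₁⁻¹ *ᵥ dδ + (x₁ t - x₂ t) ⬝ᵥ P₁⁻¹ *ᵥ dδ)
      = (x₁ t - x₂ t) ⬝ᵥ P₁⁻¹ *ᵥ dδ := by ring
  rw [hhalf]
  -- split
  have hsplit : (x₁ t - x₂ t) ⬝ᵥ P₁⁻¹ *ᵥ dδ
      = ζ ⬝ᵥ ((Jᵀ * P₁⁻¹ * N) *ᵥ ζ) + ζ ⬝ᵥ ((Jᵀ * P₁⁻¹ * B) *ᵥ dv) := by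
    rw [hdδdef, Matrix.mulVec_add, dotProduct_add, hδζ, dot_shift, dot_shift]
    simp only [Matrix.mulVec_mulVec, Matrix.mul_assoc]
  rw [hsplit, hKey2]
  -- second term equals RHS
  have hRHS : ((C.mulVec (Zvec Q (x₁ t)) + F.mulVec (w t)) -
      (C.mulVec (Zvec Q (x₂ t)) + F.mulVec (w t))) ⬝ᵥ (v₁ t - v₂ t)
      = ζ ⬝ᵥ (Cᵀ *ᵥ dv) := by
    have : (C.mulVec (Zvec Q (x₁ t)) + F.mulVec (w t)) -
        (C.mulVec (Zvec Q (x₂ t)) + F.mulVec (w t)) = C *ᵥ ζ := by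
      rw [hζdef, Matrix.mulVec_sub]; abel
    rw [this, ← hdvdef, dot_shift]
  rw [hRHS]
  -- first term nonpositive
  have hterm1 : ζ ⬝ᵥ ((Jᵀ * P₁⁻¹ * N) *ᵥ ζ) ≤ 0 := by
    rw [hKey1]
    set S : Matrix (Fin n ⊕ Fin (nZ - n)) (Fin n ⊕ Fin (nZ - n)) ℝ := Jᵀ * (X₁ * Y) with hSdef
    set u : (Fin n ⊕ Fin (nZ - n)) → ℝ := P⁻¹ *ᵥ ζ with hudef
    have hform : ζ ⬝ᵥ ((P⁻¹ * S * P⁻¹) *ᵥ ζ) = u ⬝ᵥ (S *ᵥ u) := by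
      rw [← Matrix.mulVec_mulVec, ← Matrix.mulVec_mulVec, Matrix.dotProduct_mulVec,
        ← Matrix.mulVec_transpose, hPinvsym, ← hudef]
    rw [hform]
    have hLMI' : (-(S + Sᵀ)).PosSemidef := by
      have hS : Sᵀ = (X₁ * Y)ᵀ * J := by
        rw [hSdef, Matrix.transpose_mul, Matrix.transpose_transpose]
      rw [hS]
      exact hLMI
    have hpsd' := hLMI'.dotProduct_mulVec_nonneg u
    simp only [star_trivial, Matrix.neg_mulVec, dotProduct_neg,
      Matrix.add_mulVec, dotProduct_add] at hpsd'
    have hST : u ⬝ᵥ (Sᵀ *ᵥ u) = u ⬝ᵥ (S *ᵥ u) := by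
      rw [← dot_shift, dotProduct_comm]
    rw [hST] at hpsd'
    linarith
  have h2 : ζ ⬝ᵥ (Cᵀ *ᵥ dv) ≤ ζ ⬝ᵥ (Cᵀ *ᵥ dv) := le_refl _
  linarith
end

section
/- Let S ∈ ℝ^{q×q} satisfy S + Sᵀ = 0, let Ξ ∈ ℝ^{q×m}, and let α > 0. Let ẽ₁, ẽ₂ : ℝ → ℝ^m be functions and η₁, η₂ : ℝ → ℝ^q be differentiable with η_i'(t) = S·η_i(t) + α·Ξ·ẽ_i(t) for i = 1, 2. Define outputs ṽ_i(t) := Ξᵀ·η_i(t) and V_IM(t) := (1/(2α))·‖η₁(t) − η₂(t)‖². Then V_IM is differentiable and V_IM'(t) = ⟨ṽ₁(t) − ṽ₂(t), ẽ₁(t) − ẽ₂(t)⟩ for all t; in particular the internal model η̇ = Sη + αΞẽ, ṽ = Ξᵀη is incrementally passive with input ẽ, output ṽ, and regular storage function V_IM. -/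
open Matrix

/-- the internal model `η̇ = Sη + αΞẽ`, `ṽ = Ξᵀη` with
skew-symmetric `S` is incrementally passive with storage
`V_IM = (1/(2α))‖η₁ − η₂‖²`, and in fact `V_IM' = ⟨ṽ₁ − ṽ₂, ẽ₁ − ẽ₂⟩`. -/
theorem stmt_10 (q m : ℕ) (S : Matrix (Fin q) (Fin q) ℝ) (hS : S + Sᵀ = 0)
    (Ξ : Matrix (Fin q) (Fin m) ℝ) (α : ℝ) (hα : 0 < α)
    (e₁ e₂ : ℝ → Fin m → ℝ) (η₁ η₂ : ℝ → Fin q → ℝ)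
    (hη₁ : ∀ t : ℝ, HasDerivAt η₁ (S.mulVec (η₁ t) + α • Ξ.mulVec (e₁ t)) t)
    (hη₂ : ∀ t : ℝ, HasDerivAt η₂ (S.mulVec (η₂ t) + α • Ξ.mulVec (e₂ t)) t) :
    ∀ t : ℝ,
      HasDerivAt (fun s => (1 / (2 * α)) * ((η₁ s - η₂ s) ⬝ᵥ (η₁ s - η₂ s)))
        ((Ξᵀ.mulVec (η₁ t) - Ξᵀ.mulVec (η₂ t)) ⬝ᵥ (e₁ t - e₂ t)) t := by
  intro t
  have h1 := hasDerivAt_pi.mp (hη₁ t)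
  have h2 := hasDerivAt_pi.mp (hη₂ t)
  set D₁ : Fin q → ℝ := S.mulVec (η₁ t) + α • Ξ.mulVec (e₁ t) with hD₁
  set D₂ : Fin q → ℝ := S.mulVec (η₂ t) + α • Ξ.mulVec (e₂ t) with hD₂
  have hd : ∀ i, HasDerivAt (fun s => (η₁ s i - η₂ s i) * (η₁ s i - η₂ s i))
      ((D₁ i - D₂ i) * (η₁ t i - η₂ t i) + (η₁ t i - η₂ t i) * (D₁ i - D₂ i)) t :=
    fun i => ((h1 i).sub (h2 i)).mul ((h1 i).sub (h2 i))
  have hsum := (HasDerivAt.sum (fun i (_ : i ∈ Finset.univ) => hd i)).const_mul (1 / (2 * α))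
  have hfun : (fun s => (1 / (2 * α)) * ((η₁ s - η₂ s) ⬝ᵥ (η₁ s - η₂ s))) =
      fun s => (1 / (2 * α)) * ∑ i : Fin q, (η₁ s i - η₂ s i) * (η₁ s i - η₂ s i) := by
    funext s; simp [dotProduct]
  rw [hfun]
  convert hsum using 1
  case e'_4 => rfl
  case e'_5 => rfl
  case e'_8 => funext s; simp [Finset.sum_apply]
  set d : Fin q → ℝ := η₁ t - η₂ t with hd'
  have hSd : S.mulVec d ⬝ᵥ d = 0 := by
    have h : Sᵀ = -S := by exact eq_neg_of_add_eq_zero_right hS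
    have : d ⬝ᵥ S.mulVec d = (Sᵀ.mulVec d) ⬝ᵥ d := by
      rw [dotProduct_mulVec, ← mulVec_transpose]
    rw [h] at this
    have h2 : S.mulVec d ⬝ᵥ d = - (S.mulVec d ⬝ᵥ d) := by
      rw [← dotProduct_comm (S.mulVec d) d] at this
      simpa [neg_mulVec] using this
    linarith
  have hD : D₁ - D₂ = S.mulVec d + α • Ξ.mulVec (e₁ t - e₂ t) := by
    rw [hD₁, hD₂, hd']
    simp [mulVec_sub, smul_sub]
    abel
  have hval : ∑ i, ((D₁ i - D₂ i) * (η₁ t i - η₂ t i) + (η₁ t i - η₂ t i) * (D₁ i - D₂ i))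
      = 2 * ((D₁ - D₂) ⬝ᵥ d) := by
    simp [dotProduct, Finset.mul_sum, two_mul, hd', mul_comm, Finset.sum_add_distrib]
  rw [hval, hD]
  rw [add_dotProduct, hSd, smul_dotProduct]
  have : (Ξᵀ.mulVec (η₁ t) - Ξᵀ.mulVec (η₂ t)) ⬝ᵥ (e₁ t - e₂ t)
      = Ξ.mulVec (e₁ t - e₂ t) ⬝ᵥ d := by
    rw [← mulVec_sub, hd', dotProduct_comm, dotProduct_mulVec, ← mulVec_transpose, transpose_transpose]
  rw [this]
  field_simp
  ring
end

section
/- Linear case. Let A ∈ ℝ^{n×n}, B ∈ ℝ^{n×m}, C ∈ ℝ^{m×n}, E ∈ ℝ^{n×q}, F ∈ ℝ^{m×q}, Γ ∈ ℝ^{q×q}. Let X₀ ∈ ℝ^{n×T}, U₀ ∈ ℝ^{m×T}, M₀ ∈ ℝ^{q×T} be data matrices and define X₁ := A·X₀ + B·U₀ + E·Γ·M₀ and E₀ := C·X₀ + F·Γ·M₀. Suppose there exist Y ∈ ℝ^{T×n}, G₂ ∈ ℝ^{T×m}, and a symmetric positive definite P ∈ ℝ^{n×n} such that X₀·Y = P,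 M₀·Y = 0, X₀·G₂ = 0, U₀·G₂ = I_m, M₀·G₂ = 0, X₁·Y + Yᵀ·X₁ᵀ ⪯ 0, and (X₁·G₂)ᵀ = E₀·Y. Then with K := U₀·Y·P⁻¹ it holds that P⁻¹·(A + BK) + (A + BK)ᵀ·P⁻¹ ⪯ 0 and P⁻¹·B = Cᵀ. -/
open Matrix

/-- algebraic core of data-driven linear output regulation: the
data LMIs give a gain `K = U₀·Y·P⁻¹` with `P⁻¹(A+BK) + (A+BK)ᵀP⁻¹ ⪯ 0` and
`P⁻¹B = Cᵀ`. -/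
theorem stmt_13 (n m q T : ℕ)
    (A : Matrix (Fin n) (Fin n) ℝ) (B : Matrix (Fin n) (Fin m) ℝ)
    (C : Matrix (Fin m) (Fin n) ℝ) (E : Matrix (Fin n) (Fin q) ℝ)
    (F : Matrix (Fin m) (Fin q) ℝ) (Γ : Matrix (Fin q) (Fin q) ℝ)
    (X₀ : Matrix (Fin n) (Fin T) ℝ) (U₀ : Matrix (Fin m) (Fin T) ℝ)
    (M₀ : Matrix (Fin q) (Fin T) ℝ)
    (Y : Matrix (Fin T) (Fin n) ℝ) (G₂ : Matrix (Fin T) (Fin m) ℝ)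
    (P : Matrix (Fin n) (Fin n) ℝ) (hP : P.PosDef)
    (hY1 : X₀ * Y = P) (hY2 : M₀ * Y = 0)
    (hG1 : X₀ * G₂ = 0) (hG2 : U₀ * G₂ = 1) (hG3 : M₀ * G₂ = 0)
    (hLMI : (-((A * X₀ + B * U₀ + E * Γ * M₀) * Y +
        ((A * X₀ + B * U₀ + E * Γ * M₀) * Y)ᵀ)).PosSemidef)
    (hBC : ((A * X₀ + B * U₀ + E * Γ * M₀) * G₂)ᵀ =
        (C * X₀ + F * Γ * M₀) * Y) :
    (-(P⁻¹ * (A + B * (U₀ * Y * P⁻¹)) +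
        (A + B * (U₀ * Y * P⁻¹))ᵀ * P⁻¹)).PosSemidef ∧
    P⁻¹ * B = Cᵀ := by
  have hPdet : IsUnit P.det := hP.det_pos.ne'.isUnit
  have hPinv : P⁻¹ * P = 1 := nonsing_inv_mul P hPdet
  have hPinv' : P * P⁻¹ = 1 := mul_nonsing_inv P hPdet
  have hPsym : Pᵀ = P := hP.isHermitian.eq
  have hPinvSym : (P⁻¹)ᵀ = P⁻¹ := by
    rw [transpose_nonsing_inv, hPsym]
  have hPinvH : (P⁻¹)ᴴ = P⁻¹ := by
    rw [conjTranspose_eq_transpose_of_trivial, hPinvSym]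
  -- key identities
  have hX1Y : (A * X₀ + B * U₀ + E * Γ * M₀) * Y
      = (A + B * (U₀ * Y * P⁻¹)) * P := by
    rw [Matrix.add_mul, Matrix.add_mul, Matrix.mul_assoc A, Matrix.mul_assoc B, hY1,
      Matrix.mul_assoc (E * Γ), hY2, Matrix.mul_zero, add_zero, Matrix.add_mul,
      Matrix.mul_assoc B, Matrix.mul_assoc (U₀ * Y), hPinv, Matrix.mul_one]
  have hX1G : (A * X₀ + B * U₀ + E * Γ * M₀) * G₂ = B := by
    rw [Matrix.add_mul, Matrix.add_mul, Matrix.mul_assoc A, Matrix.mul_assoc B, hG1, hG2,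
      Matrix.mul_assoc (E * Γ), hG3, Matrix.mul_zero, Matrix.mul_zero, zero_add, add_zero,
      Matrix.mul_one]
  have hE0Y : (C * X₀ + F * Γ * M₀) * Y = C * P := by
    rw [Matrix.add_mul, Matrix.mul_assoc C, hY1, Matrix.mul_assoc (F * Γ), hY2,
      Matrix.mul_zero, add_zero]
  constructor
  · have h := hLMI.mul_mul_conjTranspose_same P⁻¹
    rw [hX1Y] at h
    have heq : P⁻¹ * -((A + B * (U₀ * Y * P⁻¹)) * P +
        ((A + B * (U₀ * Y * P⁻¹)) * P)ᵀ) * (P⁻¹)ᴴ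
        = -(P⁻¹ * (A + B * (U₀ * Y * P⁻¹)) +
        (A + B * (U₀ * Y * P⁻¹))ᵀ * P⁻¹) := by
      rw [hPinvH, Matrix.transpose_mul, hPsym, Matrix.mul_neg, Matrix.neg_mul]
      congr 1
      rw [Matrix.mul_add, Matrix.add_mul]
      congr 1
      · rw [← Matrix.mul_assoc, Matrix.mul_assoc (P⁻¹ * _), hPinv', Matrix.mul_one]
      · rw [← Matrix.mul_assoc, Matrix.mul_assoc P⁻¹ P, ← Matrix.mul_assoc P⁻¹ P,
          hPinv, Matrix.one_mul]
    rwa [heq] at h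
  · rw [hX1G, hE0Y] at hBC
    calc P⁻¹ * B = P⁻¹ * (C * P)ᵀ := by rw [← hBC, transpose_transpose]
    _ = Cᵀ := by rw [Matrix.transpose_mul, hPsym, ← Matrix.mul_assoc, hPinv, Matrix.one_mul]
end

section
/- Non-zero equilibrium stabilization, algebraic core. Let Ã ∈ ℝ^{n×n_Z}, B ∈ ℝ^{n×1}, C̃ ∈ ℝ^{1×n_Z}, Ẽ ∈ ℝ^{n×(p+1)}, Γ̃ ∈ ℝ^{(p+1)×(p+1)} (n_Z ≥ n), and set 𝓘 := [I_n 0_{n×(n_Z−n)}]. Let Z₀ ∈ ℝ^{n_Z×T}, U₀ ∈ ℝ^{1×T}, M₀ ∈ ℝ^{(p+1)×T} be data matrices and define X₁ := Ã·Z₀ + B·U₀ + Ẽ·Γ̃·M₀. Suppose there exist Y ∈ ℝ^{T×n_Z}, G₂ ∈ ℝ^{T×1}, and matrices P₁ ∈ ℝ^{n×n}, P₂ ∈ ℝ^{(n_Z−n)×(n_Z−n)} with P := blockdiag(P₁, P₂) symmetric positive definite, such that Z₀·Y = P, M₀·Y = 0, Z₀·G₂ = 0, U₀·G₂ = 1,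 M₀·G₂ = 0, 𝓘ᵀ·X₁·Y + Yᵀ·X₁ᵀ·𝓘 ⪯ 0, and [ (X₁·G₂)ᵀ 0_{1×(n_Z−n)} ] = C̃·P. Then with K := U₀·Y·P⁻¹ and 𝒫 := P₁⁻¹ it holds that 𝓘ᵀ𝒫(Ã + BK) + (Ã + BK)ᵀ𝒫𝓘 ⪯ 0 and 𝓘ᵀ𝒫B = C̃ᵀ. -/
open Matrix

lemma posDef_block₁₁ {m l : Type*} [Fintype m] [Fintype l] [DecidableEq m] [DecidableEq l]
    {A : Matrix m m ℝ} {D : Matrix l l ℝ}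
    (h : (Matrix.fromBlocks A 0 0 D).PosDef) : A.PosDef := by
  refine PosDef.of_dotProduct_mulVec_pos (isHermitian_fromBlocks_iff.mp h.1).1 fun x hx => ?_
  have hne : (Sum.elim x (0 : l → ℝ)) ≠ 0 := by
    intro hc; apply hx; funext i; exact congr_fun hc (Sum.inl i)
  have := h.dotProduct_mulVec_pos hne
  simpa [fromBlocks_mulVec, Function.star_sumElim, sumElim_dotProduct_sumElim] using this

lemma posDef_block₂₂ {m l : Type*} [Fintype m] [Fintype l] [DecidableEq m] [DecidableEq l]
    {A : Matrix m m ℝ} {D : Matrix l l ℝ}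
    (h : (Matrix.fromBlocks A 0 0 D).PosDef) : D.PosDef := by
  refine PosDef.of_dotProduct_mulVec_pos (isHermitian_fromBlocks_iff.mp h.1).2.2.2 fun x hx => ?_
  have hne : (Sum.elim (0 : m → ℝ) x) ≠ 0 := by
    intro hc; apply hx; funext i; exact congr_fun hc (Sum.inr i)
  have := h.dotProduct_mulVec_pos hne
  simpa [fromBlocks_mulVec, Function.star_sumElim, sumElim_dotProduct_sumElim] using this

/-- algebraic core of data-driven stabilization of a non-zero
equilibrium: the data LMIs (with the known virtual-output matrix `C̃`)
give a gain `K = U₀·Y·P⁻¹` satisfying the model-based passivation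
conditions with `𝒫 = P₁⁻¹`. -/
theorem stmt_14 (n nZ p T : ℕ) (hnZ : n ≤ nZ)
    (At : Matrix (Fin n) (Fin n ⊕ Fin (nZ - n)) ℝ)
    (B : Matrix (Fin n) (Fin 1) ℝ)
    (Ct : Matrix (Fin 1) (Fin n ⊕ Fin (nZ - n)) ℝ)
    (Et : Matrix (Fin n) (Fin (p + 1)) ℝ)
    (Γt : Matrix (Fin (p + 1)) (Fin (p + 1)) ℝ)
    (Z₀ : Matrix (Fin n ⊕ Fin (nZ - n)) (Fin T) ℝ)
    (U₀ : Matrix (Fin 1) (Fin T) ℝ) (M₀ : Matrix (Fin (p + 1)) (Fin T) ℝ)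
    (Y : Matrix (Fin T) (Fin n ⊕ Fin (nZ - n)) ℝ)
    (G₂ : Matrix (Fin T) (Fin 1) ℝ)
    (P₁ : Matrix (Fin n) (Fin n) ℝ)
    (P₂ : Matrix (Fin (nZ - n)) (Fin (nZ - n)) ℝ)
    (hP : (Matrix.fromBlocks P₁ 0 0 P₂).PosDef)
    (hY1 : Z₀ * Y = Matrix.fromBlocks P₁ 0 0 P₂)
    (hY2 : M₀ * Y = 0)
    (hG1 : Z₀ * G₂ = 0) (hG2 : U₀ * G₂ = 1) (hG3 : M₀ * G₂ = 0)
    (hLMI : (-(((calI n (nZ - n))ᵀ * ((At * Z₀ + B * U₀ + Et * Γt * M₀) * Y)) +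
        ((At * Z₀ + B * U₀ + Et * Γt * M₀) * Y)ᵀ * calI n (nZ - n))).PosSemidef)
    (hBC : Matrix.fromCols (((At * Z₀ + B * U₀ + Et * Γt * M₀) * G₂)ᵀ) 0 =
        Ct * Matrix.fromBlocks P₁ 0 0 P₂) :
    (-(((calI n (nZ - n))ᵀ *
          (P₁⁻¹ * (At + B * (U₀ * Y * (Matrix.fromBlocks P₁ 0 0 P₂)⁻¹)))) +
        ((At + B * (U₀ * Y * (Matrix.fromBlocks P₁ 0 0 P₂)⁻¹))ᵀ * P₁⁻¹) *
          calI n (nZ - n))).PosSemidef ∧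
    (calI n (nZ - n))ᵀ * (P₁⁻¹ * B) = Ctᵀ := by
  set P : Matrix (Fin n ⊕ Fin (nZ - n)) (Fin n ⊕ Fin (nZ - n)) ℝ :=
    Matrix.fromBlocks P₁ 0 0 P₂ with hPdef
  set 𝓘 := calI n (nZ - n) with hIdef
  have hP1 : P₁.PosDef := posDef_block₁₁ hP
  have hP2 : P₂.PosDef := posDef_block₂₂ hP
  have hdet : IsUnit P.det := (Matrix.isUnit_iff_isUnit_det _).mp hP.isUnit
  have hdet1 : IsUnit P₁.det := (Matrix.isUnit_iff_isUnit_det _).mp hP1.isUnit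
  have hdet2 : IsUnit P₂.det := (Matrix.isUnit_iff_isUnit_det _).mp hP2.isUnit
  have hPt : Pᵀ = P := by
    have := hP.1; rwa [Matrix.IsHermitian, conjTranspose_eq_transpose_of_trivial] at this
  have hP1t : P₁ᵀ = P₁ := by
    have := hP1.1; rwa [Matrix.IsHermitian, conjTranspose_eq_transpose_of_trivial] at this
  have hP1it : P₁⁻¹ᵀ = P₁⁻¹ := by rw [Matrix.transpose_nonsing_inv, hP1t]
  have hPinv : P⁻¹ = Matrix.fromBlocks P₁⁻¹ 0 0 P₂⁻¹ := by
    apply Matrix.inv_eq_right_inv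
    rw [hPdef, Matrix.fromBlocks_multiply]
    simp [Matrix.mul_nonsing_inv _ hdet1, Matrix.mul_nonsing_inv _ hdet2,
      ← Matrix.fromBlocks_one]
  have hIt : 𝓘ᵀ = Matrix.fromRows 1 0 := by
    rw [hIdef, calI, transpose_fromCols, transpose_one, transpose_zero]
  have hIl : P⁻¹ * 𝓘ᵀ = 𝓘ᵀ * P₁⁻¹ := by
    rw [hIt, hPinv, Matrix.fromBlocks_mul_fromRows, Matrix.fromRows_mul]
    simp
  have hIr : 𝓘 * P⁻¹ = P₁⁻¹ * 𝓘 := by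
    rw [hIdef, calI, hPinv, Matrix.fromCols_mul_fromBlocks, Matrix.mul_fromCols]
    simp
  have hPit : (P⁻¹)ᴴ = P⁻¹ := by
    rw [conjTranspose_eq_transpose_of_trivial, Matrix.transpose_nonsing_inv, hPt]
  -- the closed-loop matrix
  set E : Matrix (Fin n) (Fin n ⊕ Fin (nZ - n)) ℝ := At + B * (U₀ * Y * P⁻¹) with hEdef
  have hE : (At * Z₀ + B * U₀ + Et * Γt * M₀) * Y = E * P := by
    rw [Matrix.add_mul, Matrix.add_mul, Matrix.mul_assoc At, hY1,
      Matrix.mul_assoc B, Matrix.mul_assoc (Et * Γt), hY2, Matrix.mul_zero, add_zero,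
      hEdef, Matrix.add_mul, Matrix.mul_assoc B, Matrix.mul_assoc (U₀ * Y),
      Matrix.nonsing_inv_mul _ hdet, Matrix.mul_one]
  constructor
  · have key := hLMI.conjTranspose_mul_mul_same P⁻¹
    have heq : (P⁻¹)ᴴ * (-((𝓘ᵀ * ((At * Z₀ + B * U₀ + Et * Γt * M₀) * Y)) +
        ((At * Z₀ + B * U₀ + Et * Γt * M₀) * Y)ᵀ * 𝓘)) * P⁻¹ =
        -((𝓘ᵀ * (P₁⁻¹ * E)) + (Eᵀ * P₁⁻¹) * 𝓘) := by
      rw [hPit, hE, Matrix.mul_neg, Matrix.neg_mul, neg_inj, Matrix.mul_add,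
        Matrix.add_mul]
      congr 1
      · rw [← Matrix.mul_assoc P⁻¹ 𝓘ᵀ, hIl, Matrix.mul_assoc (𝓘ᵀ * P₁⁻¹),
          Matrix.mul_assoc E, Matrix.mul_nonsing_inv _ hdet, Matrix.mul_one,
          Matrix.mul_assoc]
      · rw [Matrix.transpose_mul, hPt, ← Matrix.mul_assoc P⁻¹,
          ← Matrix.mul_assoc P⁻¹ P, Matrix.nonsing_inv_mul _ hdet, Matrix.one_mul,
          Matrix.mul_assoc Eᵀ 𝓘, hIr, ← Matrix.mul_assoc]
    rw [heq] at key
    exact key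
  · have hXG : (At * Z₀ + B * U₀ + Et * Γt * M₀) * G₂ = B := by
      rw [Matrix.add_mul, Matrix.add_mul, Matrix.mul_assoc At, hG1, Matrix.mul_zero,
        Matrix.mul_assoc B, hG2, Matrix.mul_one, Matrix.mul_assoc (Et * Γt), hG3,
        Matrix.mul_zero, zero_add, add_zero]
    rw [hXG] at hBC
    have hCt : Ct = Matrix.fromCols (Bᵀ * P₁⁻¹) 0 := by
      have h1 : Ct * P * P⁻¹ = Matrix.fromCols Bᵀ (0 : Matrix (Fin 1) (Fin (nZ - n)) ℝ) * P⁻¹ := by rw [← hBC]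
      rw [Matrix.mul_assoc, Matrix.mul_nonsing_inv _ hdet, Matrix.mul_one] at h1
      rw [h1, hPinv, Matrix.fromCols_mul_fromBlocks]
      simp
    rw [hCt, transpose_fromCols, Matrix.transpose_mul, hP1it, transpose_zero,
      hIt, Matrix.fromRows_mul]
    simp
end
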